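/- arXiv:2512.01423 — 8 statements merged into one kernel-verified Lean document; each statement's English description precedes it below -/
import Mathlib

section
/- Let E be a nonnegative random variable with E[E] ≤ 1, E^a a nonnegative random variable, U ~ Uniform(0,1) independent of (E^a, E), and h : [0,∞) → [0,1] a measurable control function. Suppose a, b : [0,∞) → [0,∞) satisfy sup_x a(x)(1 - h(x)) ≤ β and sup_x b(x)h(x) ≤ 1 - β for some β ∈ [0,1]. Define E^active = a(E^a) if U ≥ h(E^a) and E^active = b(E^a)·E if U < h(E^a). Then E[E^active] ≤ 1. -/
open MeasureTheory Set ProbabilityTheory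
open scoped ENNReal

/-! Conditionally on `(Eᵃ, E)`, the independent uniform `U` picks the exact branch with
probability `h(Eᵃ)`, so integrating `U` out first turns the active e-value into
`h(Eᵃ) b(Eᵃ) E + (1 - h(Eᵃ)) a(Eᵃ) ≤ (1 - β) E + β`,
whose mean is at most `(1 - β) + β = 1`. -/

theorem ProbabilityTheory.IndepFun.lintegral_comp_eq_lintegral_lintegral_map
    {Ω β γ : Type*} [MeasurableSpace Ω] [MeasurableSpace β] [MeasurableSpace γ]
    {μ : Measure Ω} [IsFiniteMeasure μ] {U : Ω → β} {X : Ω → γ}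
    (hU : Measurable U) (hX : Measurable X) (hUX : IndepFun U X μ)
    {f : β × γ → ℝ≥0∞} (hf : Measurable f) :
    ∫⁻ ω, f (U ω, X ω) ∂μ = ∫⁻ ω, ∫⁻ u, f (u, X ω) ∂(μ.map U) ∂μ := by
  rw [← lintegral_map hf (hU.prodMk hX),
    (indepFun_iff_map_prod_eq_prod_map_map hU.aemeasurable hX.aemeasurable).mp hUX,
    lintegral_prod_symm' _ hf, lintegral_map hf.lintegral_prod_left' hX]

theorem lintegral_ite_lt (π : Measure ℝ) (c : ℝ) (y z : ℝ≥0∞) :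
    ∫⁻ u, (if u < c then y else z) ∂π = π (Iio c) * y + π (Ici c) * z := by
  rw [← lintegral_add_compl _ measurableSet_Iio, compl_Iio,
    setLIntegral_congr_fun measurableSet_Iio fun u (hu : u < c) => if_pos hu,
    setLIntegral_congr_fun measurableSet_Ici fun u (hu : c ≤ u) => if_neg hu.not_gt,
    setLIntegral_const, setLIntegral_const, mul_comm y, mul_comm z]

theorem volume_Icc_zero_one_restrict_Iio {c : ℝ} (hc : c ≤ 1) :
    volume.restrict (Icc (0 : ℝ) 1) (Iio c) = ENNReal.ofReal c := by
  have : Iio c ∩ Icc 0 1 = Ico 0 c := by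
    ext u; simp only [mem_inter_iff, mem_Iio, mem_Icc, mem_Ico]; grind
  rw [Measure.restrict_apply measurableSet_Iio, this, Real.volume_Ico, sub_zero]

theorem volume_Icc_zero_one_restrict_Ici {c : ℝ} (hc : 0 ≤ c) :
    volume.restrict (Icc (0 : ℝ) 1) (Ici c) = ENNReal.ofReal (1 - c) := by
  have : Ici c ∩ Icc 0 1 = Icc c 1 := by
    ext u; simp only [mem_inter_iff, mem_Ici, mem_Icc]; grind
  rw [Measure.restrict_apply measurableSet_Ici, this, Real.volume_Icc]

theorem lintegral_uniform_ite_lt {c y z : ℝ} (hc : c ∈ Icc (0 : ℝ) 1) (hy : 0 ≤ y)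
    (hz : 0 ≤ z) :
    ∫⁻ u, ENNReal.ofReal (if u < c then y else z) ∂(volume.restrict (Icc (0 : ℝ) 1)) =
      ENNReal.ofReal (c * y + (1 - c) * z) := by
  simp_rw [apply_ite ENNReal.ofReal]
  rw [lintegral_ite_lt, volume_Icc_zero_one_restrict_Iio hc.2,
    volume_Icc_zero_one_restrict_Ici hc.1,
    ← ENNReal.ofReal_mul hc.1, ← ENNReal.ofReal_mul (sub_nonneg.2 hc.2),
    ← ENNReal.ofReal_add (mul_nonneg hc.1 hy) (mul_nonneg (sub_nonneg.2 hc.2) hz)]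

theorem integral_ite_lt_of_indepFun_uniform {Ω γ : Type*} [MeasurableSpace Ω]
    [MeasurableSpace γ]
    {μ : Measure Ω} [IsFiniteMeasure μ] {U : Ω → ℝ} {X : Ω → γ}
    (hU : Measurable U) (hX : Measurable X) (hUnif : μ.map U = volume.restrict (Icc (0 : ℝ) 1))
    (hUX : IndepFun U X μ) {c y z : γ → ℝ} (hc : Measurable c) (hy : Measurable y)
    (hz : Measurable z) (hc01 : ∀ ω, c (X ω) ∈ Icc (0 : ℝ) 1) (hy0 : ∀ ω, 0 ≤ y (X ω))
    (hz0 : ∀ ω, 0 ≤ z (X ω)) :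
    ∫ ω, (if U ω < c (X ω) then y (X ω) else z (X ω)) ∂μ =
      ∫ ω, (c (X ω) * y (X ω) + (1 - c (X ω)) * z (X ω)) ∂μ := by
  have hF : Measurable fun p : ℝ × γ => if p.1 < c p.2 then y p.2 else z p.2 :=
    Measurable.ite (measurableSet_lt measurable_fst (hc.comp measurable_snd))
      (hy.comp measurable_snd) (hz.comp measurable_snd)
  have hF_comp : Measurable fun ω => if U ω < c (X ω) then y (X ω) else z (X ω) :=
    hF.comp (hU.prodMk hX)
  have hmix_nonneg : ∀ ω, 0 ≤ c (X ω) * y (X ω) + (1 - c (X ω)) * z (X ω) := fun ω =>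
    add_nonneg (mul_nonneg (hc01 ω).1 (hy0 ω)) (mul_nonneg (sub_nonneg.2 (hc01 ω).2) (hz0 ω))
  have hF_nonneg : ∀ ω, 0 ≤ if U ω < c (X ω) then y (X ω) else z (X ω) := fun ω => by
    split_ifs
    exacts [hy0 ω, hz0 ω]
  rw [integral_eq_lintegral_of_nonneg_ae (ae_of_all _ hF_nonneg) hF_comp.aestronglyMeasurable,
    integral_eq_lintegral_of_nonneg_ae (ae_of_all _ hmix_nonneg) (by fun_prop),
    hUX.lintegral_comp_eq_lintegral_lintegral_map hU hX hF.ennreal_ofReal, hUnif]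
  simp_rw [lintegral_uniform_ite_lt (hc01 _) (hy0 _) (hz0 _)]

/-- Sufficiency of the β-decomposition for validity of the active e-value. -/
theorem active_evalue_valid
    {Ω : Type*} [MeasurableSpace Ω] (μ : Measure Ω) [IsProbabilityMeasure μ]
    (E Ea U : Ω → ℝ) (hEm : Measurable E) (hEam : Measurable Ea) (hUm : Measurable U)
    (hEnn : ∀ ω, 0 ≤ E ω) (hEann : ∀ ω, 0 ≤ Ea ω)
    (hEint : Integrable E μ) (hEmean : ∫ ω, E ω ∂μ ≤ 1)
    (hUnif : μ.map U = volume.restrict (Icc (0:ℝ) 1))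
    (hIndep : IndepFun U (fun ω => (Ea ω, E ω)) μ)
    (h a b : ℝ → ℝ) (hhm : Measurable h) (ham : Measurable a) (hbm : Measurable b)
    (hh01 : ∀ x, 0 ≤ x → h x ∈ Icc (0:ℝ) 1)
    (hann : ∀ x, 0 ≤ x → 0 ≤ a x) (hbnn : ∀ x, 0 ≤ x → 0 ≤ b x)
    (β : ℝ) (hβ : β ∈ Icc (0:ℝ) 1)
    (hA : ∀ x, 0 ≤ x → a x * (1 - h x) ≤ β)
    (hB : ∀ x, 0 ≤ x → b x * h x ≤ 1 - β) :
    ∫ ω, (if U ω < h (Ea ω) then b (Ea ω) * E ω else a (Ea ω)) ∂μ ≤ 1 := by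
  have hmix_nonneg : ∀ ω, 0 ≤ h (Ea ω) * (b (Ea ω) * E ω) + (1 - h (Ea ω)) * a (Ea ω) :=
    fun ω => add_nonneg
      (mul_nonneg (hh01 _ (hEann ω)).1 (mul_nonneg (hbnn _ (hEann ω)) (hEnn ω)))
      (mul_nonneg (sub_nonneg.2 (hh01 _ (hEann ω)).2) (hann _ (hEann ω)))
  have hmix_le : ∀ ω, h (Ea ω) * (b (Ea ω) * E ω) + (1 - h (Ea ω)) * a (Ea ω) ≤
      (1 - β) * E ω + β := fun ω => by
    nlinarith [mul_le_mul_of_nonneg_right (hB _ (hEann ω)) (hEnn ω), hA _ (hEann ω)]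
  have hbound_int : Integrable (fun ω => (1 - β) * E ω + β) μ :=
    (hEint.const_mul _).add (integrable_const _)
  calc ∫ ω, (if U ω < h (Ea ω) then b (Ea ω) * E ω else a (Ea ω)) ∂μ
      = ∫ ω, (h (Ea ω) * (b (Ea ω) * E ω) + (1 - h (Ea ω)) * a (Ea ω)) ∂μ :=
        integral_ite_lt_of_indepFun_uniform (c := fun q => h q.1) (y := fun q => b q.1 * q.2)
          (z := fun q => a q.1) hUm (hEam.prodMk hEm) hUnif hIndep (by fun_prop) (by fun_prop)
          (by fun_prop) (fun ω => hh01 _ (hEann ω))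
          (fun ω => mul_nonneg (hbnn _ (hEann ω)) (hEnn ω)) (fun ω => hann _ (hEann ω))
    _ ≤ ∫ ω, ((1 - β) * E ω + β) ∂μ :=
        integral_mono_of_nonneg (ae_of_all _ hmix_nonneg) hbound_int (ae_of_all _ hmix_le)
    _ = (1 - β) * ∫ ω, E ω ∂μ + β := by
        rw [integral_add (hEint.const_mul _) (integrable_const _), integral_const_mul,
          integral_const, probReal_univ, one_smul]
    _ ≤ 1 := by nlinarith [hβ.2]
end

section
/- Let h : [0,∞) → [0,1] be a fixed control function and a, b : [0,∞) → [0,∞). Suppose that for ALL joint distributions of nonnegative random variables (E^a, E) with E[E] ≤ 1 (and U ~ Uniform(0,1) independent of (E^a,E)), the statistic E^active = a(E^a)·1{U ≥ h(E^a)} + b(E^a)·E·1{U < h(E^a)} satisfies E[E^active] ≤ 1. Then there exists β ∈ [0,1] such that sup_{x≥0} a(x)(1 - h(x)) ≤ β and sup_{x≥0} b(x)h(x) ≤ 1 - β. -/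
/-!
Realise `U` as the first coordinate of `[0,1]²` and a coin of bias `p` as the event
`{second coordinate < p}`. Putting `E^a = y`, `E = 1/p` on heads and `E^a = x`, `E = 0` on tails
gives an admissible pair, for which validity reads
`b(y)h(y) + p·a(y)(1-h(y)) + (1-p)·a(x)(1-h(x)) ≤ 1`.
Letting `p → 0` yields `a(x)(1-h(x)) + b(y)h(y) ≤ 1` for all `x, y ≥ 0`, so
`β = sup_x a(x)(1-h(x))` works; the degenerate coin `p = 0` (i.e. `E ≡ 0`) gives `β ≤ 1`.
-/

open MeasureTheory Set ProbabilityTheory Filter Topology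

instance isProbabilityMeasure_restrict_Icc_zero_one :
    IsProbabilityMeasure (volume.restrict (Icc (0 : ℝ) 1)) :=
  ⟨by rw [Measure.restrict_apply_univ, Real.volume_Icc, sub_zero, ENNReal.ofReal_one]⟩

theorem measureReal_restrict_Icc_zero_one_Iio {c : ℝ} (hc : c ∈ Icc (0 : ℝ) 1) :
    (volume.restrict (Icc (0 : ℝ) 1)).real (Iio c) = c := by
  have hinter : Iio c ∩ Icc 0 1 = Ico 0 c := by
    ext u
    simp only [mem_inter_iff, mem_Iio, mem_Icc, mem_Ico]
    grind
  rw [measureReal_restrict_apply measurableSet_Iio, hinter, Real.volume_real_Ico, sub_zero,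
    max_eq_left hc.1]

theorem integral_ite_mem_const {α : Type*} [MeasurableSpace α] {μ : Measure α}
    [IsFiniteMeasure μ] {s : Set α} [DecidablePred (· ∈ s)] (hs : MeasurableSet s) (r t : ℝ) :
    ∫ u, (if u ∈ s then r else t) ∂μ = μ.real s * r + μ.real sᶜ * t := by
  have := integral_piecewise (μ := μ) (f := fun _ => r) (g := fun _ => t) hs
    (integrable_const r).integrableOn (integrable_const t).integrableOn
  simpa only [Set.piecewise, setIntegral_const, smul_eq_mul] using this

theorem integral_prod_ite_snd_mem {α β : Type*} [MeasurableSpace α] [MeasurableSpace β]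
    {μ : Measure α} {ν : Measure β} [SFinite μ] [IsFiniteMeasure ν] {s : Set β}
    [DecidablePred (· ∈ s)] (hs : MeasurableSet s) {f g : α → ℝ} (hf : Integrable f μ)
    (hg : Integrable g μ) :
    ∫ ω, (if ω.2 ∈ s then f ω.1 else g ω.1) ∂(μ.prod ν)
      = ν.real s * ∫ x, f x ∂μ + ν.real sᶜ * ∫ x, g x ∂μ := by
  have hsplit : (fun ω : α × β => if ω.2 ∈ s then f ω.1 else g ω.1)
      = fun ω => f ω.1 * s.indicator 1 ω.2 + g ω.1 * sᶜ.indicator 1 ω.2 := by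
    funext ω
    by_cases hω : ω.2 ∈ s <;> simp [hω]
  have hi : ∀ {t : Set β}, MeasurableSet t → Integrable (t.indicator (1 : β → ℝ)) ν :=
    fun ht => (integrable_const 1).indicator ht
  rw [hsplit, integral_add (hf.mul_prod (hi hs)) (hg.mul_prod (hi hs.compl)),
    integral_prod_mul, integral_prod_mul, integral_indicator_one hs,
    integral_indicator_one hs.compl]
  ring

/-- `E^active` at `E^a = x`, `E = e`, `U = u`. -/
noncomputable def activeEValue (h a b : ℝ → ℝ) (x e u : ℝ) : ℝ :=
  if u < h x then b x * e else a x

theorem integrable_activeEValue {μ : Measure ℝ} [IsFiniteMeasure μ] (h a b : ℝ → ℝ) (x e : ℝ) :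
    Integrable (activeEValue h a b x e) μ :=
  Integrable.piecewise (s := Iio (h x)) measurableSet_Iio (integrable_const (b x * e)).integrableOn
    (integrable_const (a x)).integrableOn

theorem integral_activeEValue (h a b : ℝ → ℝ) {x : ℝ} (hx : h x ∈ Icc (0 : ℝ) 1) (e : ℝ) :
    ∫ u, activeEValue h a b x e u ∂(volume.restrict (Icc (0 : ℝ) 1))
      = b x * e * h x + a x * (1 - h x) := by
  have := integral_ite_mem_const (μ := volume.restrict (Icc (0 : ℝ) 1)) measurableSet_Iio
    (b x * e) (a x) (s := Iio (h x))
  rw [probReal_compl_eq_one_sub measurableSet_Iio, measureReal_restrict_Icc_zero_one_Iio hx]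
    at this
  simp only [activeEValue, ← mem_Iio]
  linarith

def IsValidActiveEValue (h a b : ℝ → ℝ) : Prop :=
  ∀ (Ω : Type) [MeasurableSpace Ω] (μ : Measure Ω), IsProbabilityMeasure μ →
    ∀ (E Ea U : Ω → ℝ), Measurable E → Measurable Ea → Measurable U →
      (∀ ω, 0 ≤ E ω) → (∀ ω, 0 ≤ Ea ω) → Integrable E μ → (∫ ω, E ω ∂μ) ≤ 1 →
      μ.map U = volume.restrict (Icc (0:ℝ) 1) →
      IndepFun U (fun ω => (Ea ω, E ω)) μ →
      ∫ ω, activeEValue h a b (Ea ω) (E ω) (U ω) ∂μ ≤ 1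

theorem IsValidActiveEValue.two_point {h a b : ℝ → ℝ} (hv : IsValidActiveEValue h a b)
    {x y e p : ℝ} (hx : 0 ≤ x) (hy : 0 ≤ y) (hhx : h x ∈ Icc (0 : ℝ) 1)
    (hhy : h y ∈ Icc (0 : ℝ) 1) (he : 0 ≤ e) (hp : p ∈ Icc (0 : ℝ) 1) (hpe : p * e ≤ 1) :
    p * (b y * e * h y + a y * (1 - h y)) + (1 - p) * (a x * (1 - h x)) ≤ 1 := by
  set unif := volume.restrict (Icc (0 : ℝ) 1)
  let Ea : ℝ → ℝ := fun t => if t < p then y else x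
  let E : ℝ → ℝ := fun t => if t < p then e else 0
  have hEa : Measurable Ea := Measurable.ite measurableSet_Iio measurable_const measurable_const
  have hE : Measurable E := Measurable.ite measurableSet_Iio measurable_const measurable_const
  have hheads : unif.real (Iio p) = p := measureReal_restrict_Icc_zero_one_Iio hp
  have htails : unif.real (Iio p)ᶜ = 1 - p := by
    rw [probReal_compl_eq_one_sub measurableSet_Iio, hheads]
  have hEint : Integrable E unif :=
    Integrable.piecewise (s := Iio p) measurableSet_Iio (integrable_const e).integrableOn
      (integrable_const 0).integrableOn
  have hmean : ∫ ω, E ω.2 ∂(unif.prod unif) = p * e := by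
    have := integral_prod_ite_snd_mem (μ := unif) (ν := unif) (s := Iio p) measurableSet_Iio
      (integrable_const e) (integrable_const 0)
    simpa [hheads, htails] using this
  have hactive : ∫ ω, activeEValue h a b (Ea ω.2) (E ω.2) ω.1 ∂(unif.prod unif)
      = p * (b y * e * h y + a y * (1 - h y)) + (1 - p) * (a x * (1 - h x)) := by
    have hsplit : (fun ω : ℝ × ℝ => activeEValue h a b (Ea ω.2) (E ω.2) ω.1)
        = fun ω => if ω.2 ∈ Iio p then activeEValue h a b y e ω.1
            else activeEValue h a b x 0 ω.1 := by
      funext ω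
      by_cases hω : ω.2 < p <;> simp [Ea, E, hω]
    rw [hsplit, integral_prod_ite_snd_mem measurableSet_Iio (integrable_activeEValue h a b y e)
      (integrable_activeEValue h a b x 0), integral_activeEValue h a b hhy,
      integral_activeEValue h a b hhx, hheads, htails]
    ring
  rw [← hactive]
  refine hv (ℝ × ℝ) (unif.prod unif) inferInstance (fun ω => E ω.2) (fun ω => Ea ω.2) Prod.fst
    (hE.comp measurable_snd) (hEa.comp measurable_snd) measurable_fst ?_ ?_
    (hEint.comp_snd unif) (hmean ▸ hpe) ?_ (indepFun_prod measurable_id (hEa.prodMk hE))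
  · intro ω; dsimp only [E]; split_ifs <;> first | exact he | exact le_rfl
  · intro ω; dsimp only [Ea]; split_ifs <;> assumption
  · rw [Measure.map_fst_prod, measure_univ, one_smul]

section
variable {h a b : ℝ → ℝ} {x y : ℝ}

theorem IsValidActiveEValue.mul_one_sub_le_one (hv : IsValidActiveEValue h a b) (hx : 0 ≤ x)
    (hhx : h x ∈ Icc (0 : ℝ) 1) : a x * (1 - h x) ≤ 1 := by
  simpa using hv.two_point (p := 0) hx hx hhx hhx le_rfl ⟨le_rfl, zero_le_one⟩ (by simp)

theorem IsValidActiveEValue.add_le_one (hv : IsValidActiveEValue h a b) (hx : 0 ≤ x) (hy : 0 ≤ y)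
    (hhx : h x ∈ Icc (0 : ℝ) 1) (hhy : h y ∈ Icc (0 : ℝ) 1) :
    a x * (1 - h x) + b y * h y ≤ 1 := by
  set δ := a x * (1 - h x) - a y * (1 - h y)
  have hlim : Tendsto (fun p : ℝ => 1 + p * δ) (𝓝[>] 0) (𝓝 1) := by
    have : Continuous fun p : ℝ => 1 + p * δ := by fun_prop
    simpa using (this.tendsto 0).mono_left nhdsWithin_le_nhds
  refine ge_of_tendsto hlim (eventually_of_mem (Ioo_mem_nhdsGT one_pos) fun p hp => ?_)
  have hp0 : p ≠ 0 := hp.1.ne'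
  have := hv.two_point (e := p⁻¹) hx hy hhx hhy (inv_nonneg.2 hp.1.le) ⟨hp.1.le, hp.2.le⟩
    (mul_inv_cancel₀ hp0).le
  have hmass : p * (b y * p⁻¹ * h y) = b y * h y := by field_simp
  rw [mul_add, hmass] at this
  linarith

end

theorem active_evalue_characterization_necessity_general
    (h a b : ℝ → ℝ)
    (hh01 : ∀ x, 0 ≤ x → h x ∈ Icc (0:ℝ) 1)
    (hann : ∀ x, 0 ≤ x → 0 ≤ a x)
    (H : ∀ (Ω : Type) [MeasurableSpace Ω] (μ : Measure Ω), IsProbabilityMeasure μ →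
      ∀ (E Ea U : Ω → ℝ), Measurable E → Measurable Ea → Measurable U →
        (∀ ω, 0 ≤ E ω) → (∀ ω, 0 ≤ Ea ω) → Integrable E μ → (∫ ω, E ω ∂μ) ≤ 1 →
        μ.map U = volume.restrict (Icc (0:ℝ) 1) →
        IndepFun U (fun ω => (Ea ω, E ω)) μ →
        ∫ ω, (if U ω < h (Ea ω) then b (Ea ω) * E ω else a (Ea ω)) ∂μ ≤ 1) :
    ∃ β ∈ Icc (0:ℝ) 1,
      (∀ x, 0 ≤ x → a x * (1 - h x) ≤ β) ∧ (∀ x, 0 ≤ x → b x * h x ≤ 1 - β) := by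
  have hv : IsValidActiveEValue h a b := H
  set S := (fun x => a x * (1 - h x)) '' Ici 0
  have hS : S.Nonempty := nonempty_Ici.image _
  have hSle : ∀ y, 0 ≤ y → ∀ z ∈ S, z ≤ 1 - b y * h y := fun y hy =>
    forall_mem_image.2 fun x hx =>
      le_sub_iff_add_le.2 (hv.add_le_one hx hy (hh01 x hx) (hh01 y hy))
  have hbdd : BddAbove S := ⟨_, hSle 0 le_rfl⟩
  refine ⟨sSup S, ⟨?_, ?_⟩, fun x hx => le_csSup hbdd (mem_image_of_mem _ hx), fun y hy => ?_⟩
  · exact le_csSup_of_le hbdd (mem_image_of_mem _ self_mem_Ici)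
      (mul_nonneg (hann 0 le_rfl) (sub_nonneg.2 (hh01 0 le_rfl).2))
  · exact csSup_le hS (forall_mem_image.2 fun x hx => hv.mul_one_sub_le_one hx (hh01 x hx))
  · exact le_sub_comm.1 (csSup_le hS (hSle y hy))

/-- Necessity of the β-decomposition: if the active e-value is valid for all joint
distributions of `(E^a, E)` with `𝔼[E] ≤ 1`, then some `β ∈ [0,1]` bounds the two branches. -/
theorem active_evalue_characterization_necessity
    (h a b : ℝ → ℝ)
    (hh01 : ∀ x, 0 ≤ x → h x ∈ Icc (0:ℝ) 1)
    (hann : ∀ x, 0 ≤ x → 0 ≤ a x) (hbnn : ∀ x, 0 ≤ x → 0 ≤ b x)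
    (H : ∀ (Ω : Type) [MeasurableSpace Ω] (μ : Measure Ω), IsProbabilityMeasure μ →
      ∀ (E Ea U : Ω → ℝ), Measurable E → Measurable Ea → Measurable U →
        (∀ ω, 0 ≤ E ω) → (∀ ω, 0 ≤ Ea ω) → Integrable E μ → (∫ ω, E ω ∂μ) ≤ 1 →
        μ.map U = volume.restrict (Icc (0:ℝ) 1) →
        IndepFun U (fun ω => (Ea ω, E ω)) μ →
        ∫ ω, (if U ω < h (Ea ω) then b (Ea ω) * E ω else a (Ea ω)) ∂μ ≤ 1) :
    ∃ β ∈ Icc (0:ℝ) 1,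
      (∀ x, 0 ≤ x → a x * (1 - h x) ≤ β) ∧ (∀ x, 0 ≤ x → b x * h x ≤ 1 - β) :=
  active_evalue_characterization_necessity_general h a b hh01 hann H
end

section
/- Fix β ∈ [0,1] and a control function h : [0,∞) → [0,1] with 0 < h(x) < 1 for all x. Define a(x) = β/(1 - h(x)) and b(x) = (1-β)/h(x). Then (i) the resulting active e-value E^active = a(E^a)·1{U ≥ h(E^a)} + b(E^a)·E·1{U < h(E^a)} satisfies E[E^active] ≤ 1 whenever E is nonnegative with E[E] ≤ 1, E^a ≥ 0, and U ~ Uniform(0,1) is independent of (E^a,E); and (ii) for any other pair (a', b') satisfying sup_x a'(x)(1-h(x)) ≤ β and sup_x b'(x)h(x) ≤ 1-β, one has a'(x) ≤ a(x) and b'(x) ≤ b(x) for all x. -/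
open MeasureTheory Set ProbabilityTheory ENNReal

/-- The choice `a(x) = β/(1-h(x))`, `b(x) = (1-β)/h(x)` yields a valid active e-value,
and it is pointwise largest among all pairs satisfying the β-decomposition bounds. -/
theorem active_evalue_optimal_construction
    {Ω : Type*} [MeasurableSpace Ω] (μ : Measure Ω) [IsProbabilityMeasure μ]
    (β : ℝ) (hβ : β ∈ Icc (0:ℝ) 1)
    (h : ℝ → ℝ) (hhm : Measurable h) (hh : ∀ x, h x ∈ Ioo (0:ℝ) 1)
    (a b : ℝ → ℝ) (hadef : ∀ x, a x = β / (1 - h x)) (hbdef : ∀ x, b x = (1 - β) / h x)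
    (E Ea U : Ω → ℝ) (hEm : Measurable E) (hEam : Measurable Ea) (hUm : Measurable U)
    (hEnn : ∀ ω, 0 ≤ E ω) (hEann : ∀ ω, 0 ≤ Ea ω)
    (hEint : Integrable E μ) (hEmean : ∫ ω, E ω ∂μ ≤ 1)
    (hUnif : μ.map U = volume.restrict (Icc (0:ℝ) 1))
    (hIndep : IndepFun U (fun ω => (Ea ω, E ω)) μ) :
    (∫ ω, (if U ω < h (Ea ω) then b (Ea ω) * E ω else a (Ea ω)) ∂μ ≤ 1) ∧
    (∀ a' b' : ℝ → ℝ, (∀ x, 0 ≤ a' x) → (∀ x, 0 ≤ b' x) →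
      (∀ x, a' x * (1 - h x) ≤ β) → (∀ x, b' x * h x ≤ 1 - β) →
      ∀ x, a' x ≤ a x ∧ b' x ≤ b x) := by
  obtain ⟨hβ0, hβ1⟩ := hβ
  have hβ1' : (0:ℝ) ≤ 1 - β := by linarith
  constructor
  · -- part (i)
    have han : ∀ x, 0 ≤ a x := fun x => by
      rw [hadef x]; exact div_nonneg hβ0 (by linarith [(hh x).2])
    have hbn : ∀ x, 0 ≤ b x := fun x => by
      rw [hbdef x]; exact div_nonneg hβ1' (le_of_lt (hh x).1)
    set g : Ω → ℝ := fun ω => if U ω < h (Ea ω) then b (Ea ω) * E ω else a (Ea ω) with hg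
    have hgnn : ∀ ω, 0 ≤ g ω := by
      intro ω; simp only [hg]
      split
      · exact mul_nonneg (hbn _) (hEnn ω)
      · exact han _
    set F : ℝ × (ℝ × ℝ) → ℝ≥0∞ := fun p =>
      ENNReal.ofReal (if p.1 < h p.2.1 then b p.2.1 * p.2.2 else a p.2.1) with hF
    have hamF : Measurable (fun x => a x) := by
      have : (fun x => a x) = fun x => β / (1 - h x) := funext hadef
      rw [this]; exact measurable_const.div (measurable_const.sub hhm)
    have hbmF : Measurable (fun x => b x) := by
      have : (fun x => b x) = fun x => (1 - β) / h x := funext hbdef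
      rw [this]; exact measurable_const.div hhm
    have hFm : Measurable F := by
      apply ENNReal.measurable_ofReal.comp
      apply Measurable.ite
      · exact measurableSet_lt measurable_fst (hhm.comp (measurable_fst.comp measurable_snd))
      · exact (hbmF.comp (measurable_fst.comp measurable_snd)).mul
          (measurable_snd.comp measurable_snd)
      · exact hamF.comp (measurable_fst.comp measurable_snd)
    have hXm : Measurable (fun ω => (Ea ω, E ω)) := hEam.prodMk hEm
    have hPm : Measurable (fun ω => (U ω, (Ea ω, E ω))) := hUm.prodMk hXm
    have hgm : Measurable g := by
      have h1 : Measurable fun ω => F (U ω, (Ea ω, E ω)) := hFm.comp hPm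
      have h2 : g = fun ω => (F (U ω, (Ea ω, E ω))).toReal := by
        funext ω
        simp only [hF, hg]
        rw [ENNReal.toReal_ofReal (hgnn ω)]
      rw [h2]
      exact ENNReal.measurable_toReal.comp h1
    -- rewrite integral via lintegral
    have key : ∫⁻ ω, ENNReal.ofReal (g ω) ∂μ ≤ 1 := by
      have hmap : μ.map (fun ω => (U ω, (Ea ω, E ω)))
          = (μ.map U).prod (μ.map (fun ω => (Ea ω, E ω))) :=
        (indepFun_iff_map_prod_eq_prod_map_map hUm.aemeasurable hXm.aemeasurable).mp hIndep
      have step1 : ∫⁻ ω, ENNReal.ofReal (g ω) ∂μ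
          = ∫⁻ p, F p ∂((μ.map U).prod (μ.map (fun ω => (Ea ω, E ω)))) := by
        rw [← hmap, lintegral_map hFm hPm]
      rw [step1, hUnif]
      set ρ := μ.map (fun ω => (Ea ω, E ω)) with hρ
      have hρprob : IsProbabilityMeasure ρ := Measure.isProbabilityMeasure_map hXm.aemeasurable
      rw [lintegral_prod_symm _ hFm.aemeasurable]
      -- inner integral over u
      have inner : ∀ p : ℝ × ℝ, 0 ≤ p.2 →
          ∫⁻ u, F (u, p) ∂(volume.restrict (Icc (0:ℝ) 1))
            = ENNReal.ofReal ((1 - β) * p.2) + ENNReal.ofReal β := by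
        rintro ⟨x, y⟩ hy
        have hx0 := (hh x).1
        have hx1 := (hh x).2
        have hfeq : (fun u : ℝ => F (u, (x, y)))
            = fun u => (Iio (h x)).indicator (fun _ => ENNReal.ofReal (b x * y)) u
              + (Ici (h x)).indicator (fun _ => ENNReal.ofReal (a x)) u := by
          funext u
          by_cases hu : u < h x
          · simp [hF, hu, Set.indicator_of_mem (show u ∈ Iio (h x) from hu),
              Set.indicator_of_notMem (show u ∉ Ici (h x) by simpa using hu)]
          · simp [hF, hu, Set.indicator_of_notMem (show u ∉ Iio (h x) from hu),
              Set.indicator_of_mem (show u ∈ Ici (h x) by simpa using not_lt.mp hu)]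
        rw [hfeq, lintegral_add_left (Measurable.indicator measurable_const measurableSet_Iio),
          lintegral_indicator measurableSet_Iio _, lintegral_indicator measurableSet_Ici _,
          setLIntegral_const, setLIntegral_const]
        rw [Measure.restrict_apply measurableSet_Iio,
          Measure.restrict_apply measurableSet_Ici]
        have e1 : Iio (h x) ∩ Icc (0:ℝ) 1 = Ico 0 (h x) := by
          ext u; simp only [mem_inter_iff, mem_Iio, mem_Icc, mem_Ico]
          constructor
          · rintro ⟨h1, h2, h3⟩; exact ⟨h2, h1⟩
          · rintro ⟨h1, h2⟩; exact ⟨h2, h1, by linarith⟩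
        have e2 : Ici (h x) ∩ Icc (0:ℝ) 1 = Icc (h x) 1 := by
          ext u; simp only [mem_inter_iff, mem_Ici, mem_Icc]
          constructor
          · rintro ⟨h1, h2, h3⟩; exact ⟨h1, h3⟩
          · rintro ⟨h1, h2⟩; exact ⟨h1, by linarith, h2⟩
        rw [e1, e2, Real.volume_Ico, Real.volume_Icc]
        have hbv : b x * y * h x = (1 - β) * y := by
          rw [hbdef x]; field_simp
        have hav : a x * (1 - h x) = β := by
          rw [hadef x]; exact div_mul_cancel₀ β (by linarith)
        rw [sub_zero]
        rw [← ENNReal.ofReal_mul (mul_nonneg (hbn x) hy), hbv,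
          ← ENNReal.ofReal_mul (han x), hav]
      have inner' : ∫⁻ p, ∫⁻ u, F (u, p) ∂(volume.restrict (Icc (0:ℝ) 1)) ∂ρ
          = ∫⁻ p : ℝ × ℝ, (ENNReal.ofReal ((1 - β) * p.2) + ENNReal.ofReal β) ∂ρ := by
        apply lintegral_congr_ae
        have hae : ∀ᵐ p ∂ρ, 0 ≤ p.2 := by
          rw [hρ]
          rw [ae_map_iff hXm.aemeasurable (measurableSet_le measurable_const measurable_snd)]
          exact Filter.Eventually.of_forall fun ω => hEnn ω
        filter_upwards [hae] with p hp
        exact inner p hp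
      rw [inner', lintegral_add_right _ measurable_const, lintegral_const]
      have hE2 : ∫⁻ p : ℝ × ℝ, ENNReal.ofReal ((1 - β) * p.2) ∂ρ
          = ENNReal.ofReal (1 - β) * ∫⁻ ω, ENNReal.ofReal (E ω) ∂μ := by
        have : ∀ p : ℝ × ℝ, ENNReal.ofReal ((1 - β) * p.2)
            = ENNReal.ofReal (1 - β) * ENNReal.ofReal p.2 := fun p =>
          ENNReal.ofReal_mul hβ1'
        simp_rw [this]
        rw [lintegral_const_mul _ measurable_snd.ennreal_ofReal]
        congr 1
        rw [hρ, lintegral_map measurable_snd.ennreal_ofReal hXm]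
      rw [hE2]
      have hEl : ∫⁻ ω, ENNReal.ofReal (E ω) ∂μ ≤ 1 := by
        rw [← ofReal_integral_eq_lintegral_ofReal hEint
          (Filter.Eventually.of_forall hEnn)]
        calc ENNReal.ofReal (∫ ω, E ω ∂μ) ≤ ENNReal.ofReal 1 :=
              ENNReal.ofReal_le_ofReal hEmean
          _ = 1 := ENNReal.ofReal_one
      rw [measure_univ, mul_one]
      calc ENNReal.ofReal (1 - β) * ∫⁻ ω, ENNReal.ofReal (E ω) ∂μ
            + ENNReal.ofReal β
          ≤ ENNReal.ofReal (1 - β) * 1 + ENNReal.ofReal β := by gcongr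
        _ = 1 := by
            rw [mul_one, ← ENNReal.ofReal_add hβ1' hβ0]
            norm_num
    rw [integral_eq_lintegral_of_nonneg_ae (Filter.Eventually.of_forall hgnn)
      hgm.aestronglyMeasurable]
    calc (∫⁻ ω, ENNReal.ofReal (g ω) ∂μ).toReal ≤ (1 : ℝ≥0∞).toReal :=
          ENNReal.toReal_mono one_ne_top key
      _ = 1 := by simp
  · -- part (ii)
    intro a' b' ha'n hb'n ha' hb' x
    obtain ⟨h0, h1⟩ := hh x
    refine ⟨?_, ?_⟩
    · rw [hadef x, le_div_iff₀ (by linarith : (0:ℝ) < 1 - h x)]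
      exact ha' x
    · rw [hbdef x, le_div_iff₀ h0]
      exact hb' x
end

section
/- Let P be a valid p-value (P(P ≤ s) ≤ s for all s ∈ [0,1]), P^a a [0,1]-valued random variable independent of P, U ~ Uniform(0,1) independent of (P^a, P), h : [0,1] → [0,1] a control function, and β ∈ (0,1). Define P^active = (1 - h(P^a))/β if U ≥ h(P^a), and P^active = (h(P^a)/(1-β))·P if U < h(P^a). Then P^active is a valid p-value: P(P^active ≤ s) ≤ s for all s ∈ [0,1]. -/
/-!
Condition on `(P^a, P) = (a, p)` and put `t = h a`. Over the independent uniform `U`, the active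
p-value is at most `s` with probability at most `t · 1[t p ≤ (1 - β) s] + (1 - t) · 1[(1 - t) / β ≤ s]`.
The second term is pointwise at most `β s`. Since `P` is independent of `P^a`, for fixed `a` the
first term integrates over `P` to `t · ℙ(P ≤ c / t) ≤ t · (c / t) = c` with `c = (1 - β) s`.
-/

open MeasureTheory Set ProbabilityTheory

def IsSuperUniform (ν : Measure ℝ) : Prop :=
  ∀ s ∈ Icc (0:ℝ) 1, ν (Iic s) ≤ ENNReal.ofReal s

/-- The arguments `a`, `p`, `u` stand for the values of `P^a`, `P` and `U`. -/
noncomputable def activePValue (h : ℝ → ℝ) (β a p u : ℝ) : ℝ :=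
  if u < h a then h a / (1 - β) * p else (1 - h a) / β

theorem measurable_activePValue {h : ℝ → ℝ} (hh : Measurable h) (β : ℝ) :
    Measurable fun q : (ℝ × ℝ) × ℝ => activePValue h β q.1.1 q.1.2 q.2 := by
  unfold activePValue
  exact Measurable.ite (measurableSet_lt (by fun_prop) (by fun_prop)) (by fun_prop) (by fun_prop)

namespace IsSuperUniform

variable {ν : Measure ℝ} [IsProbabilityMeasure ν]

theorem measure_Iic_le (hν : IsSuperUniform ν) {x : ℝ} (hx : 0 ≤ x) :
    ν (Iic x) ≤ ENNReal.ofReal x := by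
  rcases le_total x 1 with hx1 | hx1
  · exact hν x ⟨hx, hx1⟩
  · calc ν (Iic x) ≤ 1 := prob_le_one
      _ ≤ ENNReal.ofReal x := by simpa using ENNReal.ofReal_le_ofReal hx1

theorem lintegral_ite_mul_le (hν : IsSuperUniform ν) {t c : ℝ} (ht : 0 ≤ t) (hc : 0 ≤ c) :
    ∫⁻ p, (if t * p ≤ c then ENNReal.ofReal t else 0) ∂ν ≤ ENNReal.ofReal c := by
  rcases ht.eq_or_lt with rfl | ht
  · simp
  have hset : {p | t * p ≤ c} = Iic (c / t) := by
    ext p; simp [le_div_iff₀ ht, mul_comm]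
  calc ∫⁻ p, (if t * p ≤ c then ENNReal.ofReal t else 0) ∂ν
      = ∫⁻ p, {p | t * p ≤ c}.indicator (fun _ => ENNReal.ofReal t) p ∂ν := by
        simp only [indicator_apply, mem_ofPred_eq]
    _ = ENNReal.ofReal t * ν (Iic (c / t)) := by
        rw [hset, lintegral_indicator_const measurableSet_Iic]
    _ ≤ ENNReal.ofReal t * ENNReal.ofReal (c / t) := by
        gcongr; exact hν.measure_Iic_le (by positivity)
    _ = ENNReal.ofReal c := by rw [← ENNReal.ofReal_mul ht.le, mul_div_cancel₀ _ ht.ne']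

end IsSuperUniform

theorem restrict_Icc_measure_ite_le_le (t A B s : ℝ) :
    volume.restrict (Icc (0:ℝ) 1) {u | (if u < t then A else B) ≤ s} ≤
      (if A ≤ s then ENNReal.ofReal t else 0) + (if B ≤ s then ENNReal.ofReal (1 - t) else 0) := by
  have hsub : {u | (if u < t then A else B) ≤ s} ⊆
      (if A ≤ s then Iio t else ∅) ∪ (if B ≤ s then Ici t else ∅) := by
    intro u hu
    by_cases hut : u < t <;> split_ifs at * <;> simp_all
  refine (measure_mono hsub).trans ((measure_union_le _ _).trans (add_le_add ?_ ?_))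
  · split_ifs
    · calc volume.restrict (Icc (0:ℝ) 1) (Iio t) = volume (Iio t ∩ Icc 0 1) :=
            Measure.restrict_apply measurableSet_Iio
        _ ≤ volume (Ico 0 t) := measure_mono fun u hu => ⟨hu.2.1, hu.1⟩
        _ = ENNReal.ofReal t := by simp
    · simp
  · split_ifs
    · calc volume.restrict (Icc (0:ℝ) 1) (Ici t) = volume (Ici t ∩ Icc 0 1) :=
            Measure.restrict_apply measurableSet_Ici
        _ ≤ volume (Icc t 1) := measure_mono fun u hu => ⟨hu.1, hu.2.2⟩
        _ = ENNReal.ofReal (1 - t) := Real.volume_Icc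
    · simp

theorem map_prod_prod_eq_of_indepFun {Ω α β γ : Type*} [MeasurableSpace Ω] [MeasurableSpace α]
    [MeasurableSpace β] [MeasurableSpace γ] {μ : Measure Ω} [IsFiniteMeasure μ]
    {X : Ω → α} {Y : Ω → β} {Z : Ω → γ}
    (hX : AEMeasurable X μ) (hY : AEMeasurable Y μ) (hZ : AEMeasurable Z μ)
    (hXY : IndepFun X Y μ) (hZXY : IndepFun Z (fun ω => (X ω, Y ω)) μ) :
    μ.map (fun ω => ((X ω, Y ω), Z ω)) = ((μ.map X).prod (μ.map Y)).prod (μ.map Z) := by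
  rw [hZXY.symm.map_prod_eq_prod_map_map (hX.prodMk hY) hZ, hXY.map_prod_eq_prod_map_map hX hY]

theorem prod_measure_activePValue_le {ρ ν : Measure ℝ} [IsProbabilityMeasure ρ]
    [IsProbabilityMeasure ν] (hν : IsSuperUniform ν) {h : ℝ → ℝ} (hhm : Measurable h)
    (hh0 : ∀ x, 0 ≤ h x) {β : ℝ} (hβ : β ∈ Ioo (0:ℝ) 1) {s : ℝ} (hs : 0 ≤ s) :
    ((ρ.prod ν).prod (volume.restrict (Icc (0:ℝ) 1)))
      {q | activePValue h β q.1.1 q.1.2 q.2 ≤ s} ≤ ENNReal.ofReal s := by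
  obtain ⟨hβ0, hβ1⟩ := hβ
  have hS : MeasurableSet {q : (ℝ × ℝ) × ℝ | activePValue h β q.1.1 q.1.2 q.2 ≤ s} :=
    measurable_activePValue hhm β measurableSet_Iic
  set F : ℝ × ℝ → ENNReal := fun x =>
    if h x.1 * x.2 ≤ (1 - β) * s then ENNReal.ofReal (h x.1) else 0
  have hslice : ∀ x : ℝ × ℝ, volume.restrict (Icc (0:ℝ) 1)
      (Prod.mk x ⁻¹' {q | activePValue h β q.1.1 q.1.2 q.2 ≤ s}) ≤ F x + ENNReal.ofReal (β * s) := by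
    intro x
    have hA : h x.1 / (1 - β) * x.2 ≤ s ↔ h x.1 * x.2 ≤ (1 - β) * s := by
      rw [div_mul_eq_mul_div, div_le_iff₀ (by linarith), mul_comm s]
    have hB : (if (1 - h x.1) / β ≤ s then ENNReal.ofReal (1 - h x.1) else 0) ≤
        ENNReal.ofReal (β * s) := by
      split_ifs with hc
      · exact ENNReal.ofReal_le_ofReal (by rwa [div_le_iff₀ hβ0, mul_comm] at hc)
      · exact zero_le
    have := restrict_Icc_measure_ite_le_le (h x.1) (h x.1 / (1 - β) * x.2) ((1 - h x.1) / β) s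
    simp only [hA] at this
    exact this.trans (by gcongr)
  rw [Measure.prod_apply hS]
  calc ∫⁻ x, volume.restrict (Icc (0:ℝ) 1)
        (Prod.mk x ⁻¹' {q | activePValue h β q.1.1 q.1.2 q.2 ≤ s}) ∂(ρ.prod ν)
      ≤ ∫⁻ x, (F x + ENNReal.ofReal (β * s)) ∂(ρ.prod ν) := lintegral_mono hslice
    _ = ∫⁻ a, ∫⁻ p, F (a, p) ∂ν ∂ρ + ENNReal.ofReal (β * s) := by
        rw [lintegral_add_right _ measurable_const, lintegral_const, measure_univ, mul_one,
          lintegral_prod _ (Measurable.ite (measurableSet_le (by fun_prop) (by fun_prop))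
            (by fun_prop) measurable_const).aemeasurable]
    _ ≤ ENNReal.ofReal ((1 - β) * s) + ENNReal.ofReal (β * s) := by
        gcongr
        exact lintegral_le_const (ae_of_all _ fun a =>
          hν.lintegral_ite_mul_le (hh0 a) (by nlinarith))
    _ = ENNReal.ofReal s := by
        rw [← ENNReal.ofReal_add (by nlinarith) (by positivity)]; ring_nf

theorem active_pvalue_valid_indep_general
    {Ω : Type*} [MeasurableSpace Ω] (μ : Measure Ω) [IsProbabilityMeasure μ]
    (P Pa U : Ω → ℝ) (hPm : Measurable P) (hPam : Measurable Pa) (hUm : Measurable U)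
    (hP : ∀ s ∈ Icc (0:ℝ) 1, μ {ω | P ω ≤ s} ≤ ENNReal.ofReal s)
    (hUnif : μ.map U = volume.restrict (Icc (0:ℝ) 1))
    (hIndepPPa : IndepFun P Pa μ)
    (hIndepU : IndepFun U (fun ω => (Pa ω, P ω)) μ)
    (h : ℝ → ℝ) (hhm : Measurable h) (hh01 : ∀ x, h x ∈ Icc (0:ℝ) 1)
    (β : ℝ) (hβ : β ∈ Ioo (0:ℝ) 1) :
    ∀ s ∈ Icc (0:ℝ) 1,
      μ {ω | (if U ω < h (Pa ω) then (h (Pa ω) / (1 - β)) * P ω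
              else (1 - h (Pa ω)) / β) ≤ s} ≤ ENNReal.ofReal s := by
  intro s hs
  have hPsuper : IsSuperUniform (μ.map P) := fun s hs => by
    rw [Measure.map_apply hPm measurableSet_Iic]
    exact hP s hs
  have hlaw := map_prod_prod_eq_of_indepFun hPam.aemeasurable hPm.aemeasurable
    hUm.aemeasurable hIndepPPa.symm hIndepU
  calc μ {ω | activePValue h β (Pa ω) (P ω) (U ω) ≤ s}
      = μ.map (fun ω => ((Pa ω, P ω), U ω)) {q | activePValue h β q.1.1 q.1.2 q.2 ≤ s} :=
        (Measure.map_apply ((hPam.prodMk hPm).prodMk hUm)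
          (measurable_activePValue hhm β measurableSet_Iic)).symm
    _ ≤ ENNReal.ofReal s := by
        have := Measure.isProbabilityMeasure_map (μ := μ) hPam.aemeasurable
        have := Measure.isProbabilityMeasure_map (μ := μ) hPm.aemeasurable
        rw [hlaw, hUnif]
        exact prod_measure_activePValue_le hPsuper hhm (fun x => (hh01 x).1) hβ hs.1

/-- Validity of the active p-value under independence of `P` and `P^a`. -/
theorem active_pvalue_valid_indep
    {Ω : Type*} [MeasurableSpace Ω] (μ : Measure Ω) [IsProbabilityMeasure μ]
    (P Pa U : Ω → ℝ) (hPm : Measurable P) (hPam : Measurable Pa) (hUm : Measurable U)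
    (hP : ∀ s ∈ Icc (0:ℝ) 1, μ {ω | P ω ≤ s} ≤ ENNReal.ofReal s)
    (hPa01 : ∀ ω, Pa ω ∈ Icc (0:ℝ) 1)
    (hUnif : μ.map U = volume.restrict (Icc (0:ℝ) 1))
    (hIndepPPa : IndepFun P Pa μ)
    (hIndepU : IndepFun U (fun ω => (Pa ω, P ω)) μ)
    (h : ℝ → ℝ) (hhm : Measurable h) (hh01 : ∀ x, h x ∈ Icc (0:ℝ) 1)
    (β : ℝ) (hβ : β ∈ Ioo (0:ℝ) 1) :
    ∀ s ∈ Icc (0:ℝ) 1,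
      μ {ω | (if U ω < h (Pa ω) then (h (Pa ω) / (1 - β)) * P ω
              else (1 - h (Pa ω)) / β) ≤ s} ≤ ENNReal.ofReal s :=
  active_pvalue_valid_indep_general μ P Pa U hPm hPam hUm hP hUnif hIndepPPa hIndepU h hhm hh01 β hβ
end

section
/- Let P be a valid p-value (P(P ≤ s) ≤ s for all s ∈ [0,1]), P^a any [0,1]-valued random variable possibly dependent on P, U ~ Uniform(0,1) independent of (P^a, P), h : [0,1] → [0,1], and β ∈ (0,1). Define P^active = (1 - h(P^a))/β if U ≥ h(P^a), and P^active = (sup_y h(y)/(1-β))·P if U < h(P^a). Then P(P^active ≤ s) ≤ s for all s ∈ [0,1]. -/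
open MeasureTheory Set ProbabilityTheory

/-- Validity of the active p-value under arbitrary dependence between `P` and `P^a`,
using the conservative scaling `sup_y h(y)/(1-β)` in the query branch. -/
theorem active_pvalue_valid_general
    {Ω : Type*} [MeasurableSpace Ω] (μ : Measure Ω) [IsProbabilityMeasure μ]
    (P Pa U : Ω → ℝ) (hPm : Measurable P) (hPam : Measurable Pa) (hUm : Measurable U)
    (hP : ∀ s ∈ Icc (0:ℝ) 1, μ {ω | P ω ≤ s} ≤ ENNReal.ofReal s)
    (hPa01 : ∀ ω, Pa ω ∈ Icc (0:ℝ) 1)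
    (hUnif : μ.map U = volume.restrict (Icc (0:ℝ) 1))
    (hIndepU : IndepFun U (fun ω => (Pa ω, P ω)) μ)
    (h : ℝ → ℝ) (hhm : Measurable h) (hh01 : ∀ x, h x ∈ Icc (0:ℝ) 1)
    (β : ℝ) (hβ : β ∈ Ioo (0:ℝ) 1) :
    ∀ s ∈ Icc (0:ℝ) 1,
      μ {ω | (if U ω < h (Pa ω) then ((⨆ y : Icc (0:ℝ) 1, h y) / (1 - β)) * P ω
              else (1 - h (Pa ω)) / β) ≤ s} ≤ ENNReal.ofReal s := by
  intro s hs
  obtain ⟨hs0, hs1⟩ := hs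
  obtain ⟨hβ0, hβ1⟩ := hβ
  set M : ℝ := ⨆ y : Icc (0:ℝ) 1, h y with hMdef
  have hbdd : BddAbove (range fun y : Icc (0:ℝ) 1 => h y) :=
    ⟨1, by rintro _ ⟨y, rfl⟩; exact (hh01 y).2⟩
  have hM1 : M ≤ 1 := ciSup_le fun y => (hh01 y).2
  have hMle : ∀ ω, h (Pa ω) ≤ M := fun ω => le_ciSup hbdd ⟨Pa ω, hPa01 ω⟩
  have hM0 : 0 ≤ M := le_trans (hh01 0).1 (le_ciSup hbdd ⟨0, by norm_num⟩)
  have h1β : (0:ℝ) < 1 - β := by linarith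
  have hβs0 : (0:ℝ) ≤ β * s := by positivity
  have hβs1 : β * s ≤ 1 := by nlinarith
  set pair : Ω → ℝ × ℝ := fun ω => (Pa ω, P ω) with hpairdef
  -- the two covering sets
  have hsub : {ω | (if U ω < h (Pa ω) then (M / (1 - β)) * P ω
              else (1 - h (Pa ω)) / β) ≤ s} ⊆
      (U ⁻¹' Iio M ∩ pair ⁻¹' {p : ℝ × ℝ | M / (1 - β) * p.2 ≤ s})
        ∪ (U ⁻¹' Ici (1 - β * s) ∩ pair ⁻¹' {p : ℝ × ℝ | 1 - β * s ≤ h p.1}) := by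
    intro ω hω
    simp only [mem_setOf_eq] at hω
    by_cases hc : U ω < h (Pa ω)
    · left
      rw [if_pos hc] at hω
      exact ⟨lt_of_lt_of_le hc (hMle ω), hω⟩
    · right
      rw [if_neg hc] at hω
      have h3 : 1 - β * s ≤ h (Pa ω) := by
        have := (div_le_iff₀ hβ0).mp hω
        linarith
      exact ⟨le_trans h3 (not_lt.mp hc), h3⟩
  have hT1 : MeasurableSet {p : ℝ × ℝ | M / (1 - β) * p.2 ≤ s} :=
    measurableSet_le (by fun_prop) measurable_const
  have hT2 : MeasurableSet {p : ℝ × ℝ | 1 - β * s ≤ h p.1} :=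
    measurableSet_le measurable_const (hhm.comp measurable_fst)
  have e1 : μ (U ⁻¹' Iio M ∩ pair ⁻¹' {p : ℝ × ℝ | M / (1 - β) * p.2 ≤ s})
      = μ (U ⁻¹' Iio M) * μ (pair ⁻¹' {p : ℝ × ℝ | M / (1 - β) * p.2 ≤ s}) :=
    hIndepU.measure_inter_preimage_eq_mul _ _ measurableSet_Iio hT1
  have e2 : μ (U ⁻¹' Ici (1 - β * s) ∩ pair ⁻¹' {p : ℝ × ℝ | 1 - β * s ≤ h p.1})
      = μ (U ⁻¹' Ici (1 - β * s)) * μ (pair ⁻¹' {p : ℝ × ℝ | 1 - β * s ≤ h p.1}) :=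
    hIndepU.measure_inter_preimage_eq_mul _ _ measurableSet_Ici hT2
  have hUIio : μ (U ⁻¹' Iio M) = ENNReal.ofReal M := by
    rw [← Measure.map_apply hUm measurableSet_Iio, hUnif,
      Measure.restrict_apply measurableSet_Iio]
    have hset : Iio M ∩ Icc (0:ℝ) 1 = Ico 0 M := by
      ext x
      simp only [mem_inter_iff, mem_Iio, mem_Icc, mem_Ico]
      constructor
      · rintro ⟨a, b, c⟩; exact ⟨b, a⟩
      · rintro ⟨a, b⟩; exact ⟨b, a, by linarith⟩
    rw [hset, Real.volume_Ico, sub_zero]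
  have hUIci : μ (U ⁻¹' Ici (1 - β * s)) = ENNReal.ofReal (β * s) := by
    rw [← Measure.map_apply hUm measurableSet_Ici, hUnif,
      Measure.restrict_apply measurableSet_Ici]
    have hset : Ici (1 - β * s) ∩ Icc (0:ℝ) 1 = Icc (1 - β * s) 1 := by
      ext x
      simp only [mem_inter_iff, mem_Ici, mem_Icc]
      constructor
      · rintro ⟨a, b, c⟩; exact ⟨a, c⟩
      · rintro ⟨a, b⟩; exact ⟨a, by linarith, b⟩
    rw [hset, Real.volume_Icc]
    congr 1
    ring
  -- bound for the first term
  have hbound1 : μ (U ⁻¹' Iio M) * μ (pair ⁻¹' {p : ℝ × ℝ | M / (1 - β) * p.2 ≤ s})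
      ≤ ENNReal.ofReal ((1 - β) * s) := by
    rw [hUIio]
    rcases eq_or_lt_of_le hM0 with hM0' | hM0'
    · rw [← hM0']
      simp
    · have hset : pair ⁻¹' {p : ℝ × ℝ | M / (1 - β) * p.2 ≤ s}
          = {ω | P ω ≤ s * (1 - β) / M} := by
        ext ω
        simp only [mem_preimage, mem_setOf_eq, hpairdef]
        rw [div_mul_eq_mul_div, div_le_iff₀ h1β, le_div_iff₀ hM0', mul_comm]
      rw [hset]
      set c := s * (1 - β) / M with hcdef
      have hc0 : 0 ≤ c := by positivity
      by_cases hc1 : c ≤ 1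
      · calc ENNReal.ofReal M * μ {ω | P ω ≤ c}
            ≤ ENNReal.ofReal M * ENNReal.ofReal c :=
              mul_le_mul_right (hP c ⟨hc0, hc1⟩) _
          _ = ENNReal.ofReal (M * c) := (ENNReal.ofReal_mul hM0).symm
          _ = ENNReal.ofReal ((1 - β) * s) := by
              congr 1
              rw [hcdef]
              field_simp
      · have hMlt : M ≤ (1 - β) * s := by
          push_neg at hc1
          rw [hcdef, lt_div_iff₀ hM0'] at hc1
          nlinarith
        calc ENNReal.ofReal M * μ {ω | P ω ≤ c}
            ≤ ENNReal.ofReal M * 1 := mul_le_mul_right prob_le_one _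
          _ = ENNReal.ofReal M := mul_one _
          _ ≤ ENNReal.ofReal ((1 - β) * s) := ENNReal.ofReal_le_ofReal hMlt
  -- bound for the second term
  have hbound2 : μ (U ⁻¹' Ici (1 - β * s)) * μ (pair ⁻¹' {p : ℝ × ℝ | 1 - β * s ≤ h p.1})
      ≤ ENNReal.ofReal (β * s) := by
    rw [hUIci]
    calc ENNReal.ofReal (β * s) * μ (pair ⁻¹' {p : ℝ × ℝ | 1 - β * s ≤ h p.1})
        ≤ ENNReal.ofReal (β * s) * 1 := mul_le_mul_right prob_le_one _
      _ = ENNReal.ofReal (β * s) := mul_one _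
  calc μ {ω | (if U ω < h (Pa ω) then (M / (1 - β)) * P ω
              else (1 - h (Pa ω)) / β) ≤ s}
      ≤ μ ((U ⁻¹' Iio M ∩ pair ⁻¹' {p : ℝ × ℝ | M / (1 - β) * p.2 ≤ s})
        ∪ (U ⁻¹' Ici (1 - β * s) ∩ pair ⁻¹' {p : ℝ × ℝ | 1 - β * s ≤ h p.1})) :=
        measure_mono hsub
    _ ≤ μ (U ⁻¹' Iio M ∩ pair ⁻¹' {p : ℝ × ℝ | M / (1 - β) * p.2 ≤ s})
        + μ (U ⁻¹' Ici (1 - β * s) ∩ pair ⁻¹' {p : ℝ × ℝ | 1 - β * s ≤ h p.1}) :=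
        measure_union_le _ _
    _ ≤ ENNReal.ofReal ((1 - β) * s) + ENNReal.ofReal (β * s) := by
        rw [e1, e2]; exact add_le_add hbound1 hbound2
    _ = ENNReal.ofReal ((1 - β) * s + β * s) :=
        (ENNReal.ofReal_add (by positivity) hβs0).symm
    _ = ENNReal.ofReal s := by ring_nf
end

section
/- Fix β ∈ (0,1) and a measurable h : [0,1] → [0,1]. Suppose a : [0,1] → [0,∞) satisfies E[(1 - h(P^a))·1{a(P^a) ≤ s}] ≤ βs for all s ∈ [0,1] and all distributions of P^a on [0,1]. Then for every x ∈ [0,1] with a(x) ≤ 1, one has a(x) ≥ (1 - h(x))/β. Consequently a(x) = (1 - h(x))/β is the pointwise smallest valid choice among functions with a(x) ≤ 1. -/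
open MeasureTheory Set ProbabilityTheory

/-- Optimality of the non-query branch: any valid `a` with `a(x) ≤ 1` satisfies
`a(x) ≥ (1 - h(x))/β`, and the choice `a(x) = (1 - h(x))/β` itself satisfies the constraint. -/
theorem active_pvalue_a_optimal
    (β : ℝ) (hβ : β ∈ Ioo (0:ℝ) 1)
    (h : ℝ → ℝ) (hhm : Measurable h) (hh01 : ∀ x ∈ Icc (0:ℝ) 1, h x ∈ Icc (0:ℝ) 1)
    (a : ℝ → ℝ) (hann : ∀ x, 0 ≤ a x)
    (H : ∀ (Ω : Type) [MeasurableSpace Ω] (μ : Measure Ω), IsProbabilityMeasure μ →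
      ∀ (Pa : Ω → ℝ), Measurable Pa → (∀ ω, Pa ω ∈ Icc (0:ℝ) 1) →
        ∀ s ∈ Icc (0:ℝ) 1,
          ∫ ω, (1 - h (Pa ω)) * (if a (Pa ω) ≤ s then (1:ℝ) else 0) ∂μ ≤ β * s) :
    (∀ x ∈ Icc (0:ℝ) 1, a x ≤ 1 → (1 - h x) / β ≤ a x) ∧
    (∀ (Ω : Type) [MeasurableSpace Ω] (μ : Measure Ω), IsProbabilityMeasure μ →
      ∀ (Pa : Ω → ℝ), Measurable Pa → (∀ ω, Pa ω ∈ Icc (0:ℝ) 1) →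
        ∀ s ∈ Icc (0:ℝ) 1,
          ∫ ω, (1 - h (Pa ω)) * (if (1 - h (Pa ω)) / β ≤ s then (1:ℝ) else 0) ∂μ ≤ β * s) := by
  obtain ⟨hβ0, hβ1⟩ := hβ
  constructor
  · intro x hx hax1
    have := H Unit (Measure.dirac ()) (by infer_instance) (fun _ => x)
      measurable_const (fun _ => hx) (a x) ⟨hann x, hax1⟩
    simp only [integral_dirac] at this
    simp only [if_pos (le_refl (a x))] at this
    rw [div_le_iff₀ hβ0]
    linarith [this]
  · intro Ω _ μ hμ Pa hPam hPa01 s hs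
    have hbound : ∀ ω, (1 - h (Pa ω)) * (if (1 - h (Pa ω)) / β ≤ s then (1:ℝ) else 0)
        ≤ β * s := by
      intro ω
      by_cases hc : (1 - h (Pa ω)) / β ≤ s
      · rw [if_pos hc, mul_one]
        rw [div_le_iff₀ hβ0] at hc
        linarith
      · rw [if_neg hc, mul_zero]
        exact mul_nonneg hβ0.le hs.1
    have hnn : ∀ ω, 0 ≤ (1 - h (Pa ω)) * (if (1 - h (Pa ω)) / β ≤ s then (1:ℝ) else 0) := by
      intro ω
      have h2 := (hh01 (Pa ω) (hPa01 ω)).2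
      have : (0:ℝ) ≤ 1 - h (Pa ω) := by linarith
      split <;> simp [this]
    calc ∫ ω, (1 - h (Pa ω)) * (if (1 - h (Pa ω)) / β ≤ s then (1:ℝ) else 0) ∂μ
        ≤ ∫ _ω, β * s ∂μ := by
          apply integral_mono_of_nonneg
          · exact Filter.Eventually.of_forall hnn
          · exact integrable_const _
          · exact Filter.Eventually.of_forall hbound
      _ = β * s := by simp [hμ.measure_univ]
end

section
/- Let U ~ Uniform(0,1), P a random variable with P(P ≤ s) ≤ s for all s ∈ [0,1], U independent of P, β ∈ (0,1), and c ∈ (0,1] a constant. Define P^active = (1−c)/β if U ≥ c, and P^active = (c/(1−β))·P if U < c. Then for all s ∈ [0,1], P(P^active ≤ s) = (1−c)·1{(1−c)/β ≤ s} + c·P(P ≤ (1−β)s/c) ≤ βs + (1−β)s = s; in particular P(P^active ≤ s) ≤ s. -/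
open MeasureTheory Set ProbabilityTheory

/-- Active p-value with a constant control function `h ≡ c`: exact decomposition of
`P(P^active ≤ s)` and super-uniformity of the resulting statistic. -/
theorem active_pvalue_constant_control
    {Ω : Type*} [MeasurableSpace Ω] (μ : Measure Ω) [IsProbabilityMeasure μ]
    (P U : Ω → ℝ) (hPm : Measurable P) (hUm : Measurable U)
    (hP : ∀ s ∈ Icc (0:ℝ) 1, (μ {ω | P ω ≤ s}).toReal ≤ s)
    (hUnif : μ.map U = volume.restrict (Icc (0:ℝ) 1))
    (hIndep : IndepFun U P μ)
    (β : ℝ) (hβ : β ∈ Ioo (0:ℝ) 1) (c : ℝ) (hc : c ∈ Ioc (0:ℝ) 1) :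
    ∀ s ∈ Icc (0:ℝ) 1,
      ((μ {ω | (if U ω < c then (c / (1 - β)) * P ω else (1 - c) / β) ≤ s}).toReal
          = (1 - c) * (if (1 - c) / β ≤ s then 1 else 0)
            + c * (μ {ω | P ω ≤ (1 - β) * s / c}).toReal) ∧
      (μ {ω | (if U ω < c then (c / (1 - β)) * P ω else (1 - c) / β) ≤ s}).toReal ≤ s := by
  obtain ⟨hβ0, hβ1⟩ := hβ
  obtain ⟨hc0, hc1⟩ := hc
  have h1β : (0:ℝ) < 1 - β := by linarith
  intro s hs
  obtain ⟨hs0, hs1⟩ := hs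
  set t : ℝ := (1 - β) * s / c with ht
  have ht0 : 0 ≤ t := by positivity
  -- rewrite the event
  have hEset : {ω | (if U ω < c then (c / (1 - β)) * P ω else (1 - c) / β) ≤ s}
      = (U ⁻¹' Iio c ∩ P ⁻¹' Iic t) ∪
        ((U ⁻¹' Iio c)ᶜ ∩ (if (1 - c) / β ≤ s then (univ : Set Ω) else ∅)) := by
    ext ω
    by_cases hU : U ω < c
    · rw [mem_setOf_eq, if_pos hU]
      simp only [mem_union, mem_inter_iff, mem_preimage, mem_Iio, mem_Iic, mem_compl_iff,
        hU, not_true, false_and, or_false, true_and]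
      rw [div_mul_eq_mul_div, div_le_iff₀ h1β, ht, le_div_iff₀ hc0]
      constructor <;> intro h <;> nlinarith
    · simp only [mem_setOf_eq, if_neg hU, mem_union, mem_inter_iff, mem_preimage,
        mem_Iio, mem_Iic, mem_compl_iff, hU, not_false_iff, true_and, false_and, false_or]
      by_cases h : (1 - c) / β ≤ s <;> simp [h]
  have hmU : MeasurableSet (U ⁻¹' Iio c) := hUm measurableSet_Iio
  have hmP : MeasurableSet (P ⁻¹' Iic t) := hPm measurableSet_Iic
  -- measure of U<c
  have hUc : μ (U ⁻¹' Iio c) = ENNReal.ofReal c := by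
    rw [← Measure.map_apply hUm measurableSet_Iio, hUnif,
      Measure.restrict_apply measurableSet_Iio]
    have : Iio c ∩ Icc (0:ℝ) 1 = Ico 0 c := by
      ext x; simp only [mem_inter_iff, mem_Iio, mem_Icc, mem_Ico]
      constructor
      · rintro ⟨h1, h2, _⟩; exact ⟨h2, h1⟩
      · rintro ⟨h1, h2⟩; exact ⟨h2, h1, by linarith⟩
    rw [this, Real.volume_Ico, sub_zero]
  have hUcc : μ ((U ⁻¹' Iio c)ᶜ) = ENNReal.ofReal (1 - c) := by
    rw [measure_compl hmU (measure_ne_top μ _), hUc, measure_univ]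
    rw [← ENNReal.ofReal_one, ← ENNReal.ofReal_sub _ hc0.le]
  have hdisj : Disjoint (U ⁻¹' Iio c ∩ P ⁻¹' Iic t)
      ((U ⁻¹' Iio c)ᶜ ∩ (if (1 - c) / β ≤ s then (univ : Set Ω) else ∅)) := by
    apply Disjoint.mono inter_subset_left inter_subset_left
    exact disjoint_compl_right
  have hmB : MeasurableSet ((U ⁻¹' Iio c)ᶜ ∩ (if (1 - c) / β ≤ s then (univ : Set Ω) else ∅)) := by
    apply hmU.compl.inter
    by_cases h : (1 - c) / β ≤ s <;> simp [h]
  have hA : μ (U ⁻¹' Iio c ∩ P ⁻¹' Iic t) = ENNReal.ofReal c * μ {ω | P ω ≤ t} := by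
    rw [hIndep.measure_inter_preimage_eq_mul _ _ measurableSet_Iio measurableSet_Iic, hUc]
    rfl
  have hB : μ ((U ⁻¹' Iio c)ᶜ ∩ (if (1 - c) / β ≤ s then (univ : Set Ω) else ∅))
      = if (1 - c) / β ≤ s then ENNReal.ofReal (1 - c) else 0 := by
    by_cases h : (1 - c) / β ≤ s <;> simp [h, hUcc]
  have hmeas : μ {ω | (if U ω < c then (c / (1 - β)) * P ω else (1 - c) / β) ≤ s}
      = ENNReal.ofReal c * μ {ω | P ω ≤ t} +
        (if (1 - c) / β ≤ s then ENNReal.ofReal (1 - c) else 0) := by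
    rw [hEset, measure_union hdisj hmB, hA, hB]
  have hPfin : μ {ω | P ω ≤ t} ≠ ⊤ := measure_ne_top μ _
  have htor : (μ {ω | (if U ω < c then (c / (1 - β)) * P ω else (1 - c) / β) ≤ s}).toReal
      = c * (μ {ω | P ω ≤ t}).toReal + (if (1 - c) / β ≤ s then (1 - c) else 0) := by
    rw [hmeas, ENNReal.toReal_add (ENNReal.mul_ne_top ENNReal.ofReal_ne_top hPfin)
      (by by_cases h : (1 - c) / β ≤ s <;> simp [h]),
      ENNReal.toReal_mul, ENNReal.toReal_ofReal hc0.le]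
    congr 1
    by_cases h : (1 - c) / β ≤ s <;> simp [h, ENNReal.toReal_ofReal (by linarith : (0:ℝ) ≤ 1 - c)]
  constructor
  · rw [htor]
    by_cases h : (1 - c) / β ≤ s <;> simp [h] <;> ring
  · rw [htor]
    have hind : (if (1 - c) / β ≤ s then (1 - c) else 0) ≤ β * s := by
      by_cases h : (1 - c) / β ≤ s
      · rw [if_pos h]
        rw [div_le_iff₀ hβ0] at h
        linarith
      · rw [if_neg h]; positivity
    have hterm : c * (μ {ω | P ω ≤ t}).toReal ≤ (1 - β) * s := by
      by_cases h : t ≤ 1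
      · have := hP t ⟨ht0, h⟩
        calc c * (μ {ω | P ω ≤ t}).toReal ≤ c * t := by
              exact mul_le_mul_of_nonneg_left this hc0.le
          _ = (1 - β) * s := by rw [ht, mul_comm, div_mul_cancel₀ _ hc0.ne']
      · push_neg at h
        have hle1 : (μ {ω | P ω ≤ t}).toReal ≤ 1 := by
          rw [← ENNReal.toReal_one]
          exact ENNReal.toReal_mono (by simp) prob_le_one
        have : c < (1 - β) * s := by
          rw [ht, lt_div_iff₀ hc0] at h; linarith
        nlinarith [(μ {ω | P ω ≤ t}).toReal, ENNReal.toReal_nonneg (a := μ {ω | P ω ≤ t})]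
    linarith
end

section
/- Fix β ∈ (0,1) and bounded measurable h : [0,1] → [0,1] with M := sup_y h(y) ≤ 1. Suppose b̃ : [0,1] → [0,∞) satisfies b̃(x) ≤ (M/(1−β))·1{h(x) > 0} for all x with strict inequality at some point x₀ with h(x₀) > 0. Then there exist a valid p-value P and a [0,1]-valued random variable P^a (possibly dependent on P) such that E[h(P^a)·1{b̃(P^a)·P ≤ s}] > (1−β)s for some s ∈ [0,1]. -/
open MeasureTheory Set ProbabilityTheory

/-!
Let `P` be uniform on `[0,1]`, write `c = M/(1-β)` and `b₀ = b̃(x₀) < c`, and couple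
`P^a = x₁` on `{P ≤ t₁}`, `P^a = x₀` otherwise, with `t₂ = 1 - β`, `s = b₀ t₂` and
`t₁ = s/c < t₂`. Since `b̃ ≤ c`, the query branch fires on all of `{P ≤ t₁}`, and since
`b₀ t₂ = s` it also fires on `{t₁ < P ≤ t₂}`; so its expectation is at least
`h(x₁) t₁ + h(x₀) (t₂ - t₁)`. The second interval has positive length, so this exceeds
`M t₁ = (1-β) s` as soon as `h(x₁)` is close enough to `M = sup h`.
-/

lemma restrict_Icc_zero_one_setOf_le (s : ℝ) :
    volume.restrict (Icc (0:ℝ) 1) {ω | ω ≤ s} ≤ ENNReal.ofReal s := by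
  change volume.restrict _ (Iic s) ≤ _
  rw [Measure.restrict_apply measurableSet_Iic]
  calc volume (Iic s ∩ Icc 0 1) ≤ volume (Icc 0 s) := measure_mono fun x hx => ⟨hx.2.1, hx.1⟩
    _ = ENNReal.ofReal s := by rw [Real.volume_Icc, sub_zero]

lemma setIntegral_Icc_zero_one_step (a c : ℝ) {t₁ t₂ : ℝ}
    (ht₁ : 0 ≤ t₁) (ht₁₂ : t₁ ≤ t₂) (ht₂ : t₂ ≤ 1) :
    ∫ ω in Icc (0:ℝ) 1, ((Iic t₁).indicator (fun _ => a) ω + (Ioc t₁ t₂).indicator (fun _ => c) ω)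
      = a * t₁ + c * (t₂ - t₁) := by
  have hIic : Iic t₁ ∩ Icc 0 1 = Icc 0 t₁ := by
    ext x
    simp only [mem_inter_iff, mem_Iic, mem_Icc]
    grind
  have hIoc : Ioc t₁ t₂ ∩ Icc 0 1 = Ioc t₁ t₂ :=
    inter_eq_left.2 fun x hx => ⟨ht₁.trans hx.1.le, hx.2.trans ht₂⟩
  rw [integral_add ((integrable_const a).indicator measurableSet_Iic)
      ((integrable_const c).indicator measurableSet_Ioc),
    integral_indicator_const _ measurableSet_Iic, integral_indicator_const _ measurableSet_Ioc,
    measureReal_restrict_apply measurableSet_Iic, measureReal_restrict_apply measurableSet_Ioc,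
    hIic, hIoc, Real.volume_real_Icc_of_le ht₁, Real.volume_real_Ioc_of_le ht₁₂,
    smul_eq_mul, smul_eq_mul, sub_zero, mul_comm t₁, mul_comm (t₂ - t₁)]

noncomputable def switchAt (t x₁ x₀ ω : ℝ) : ℝ := if ω ≤ t then x₁ else x₀

noncomputable def queryBranch (h b : ℝ → ℝ) (s x p : ℝ) : ℝ := h x * if b x * p ≤ s then 1 else 0

section switchAt

variable {h b : ℝ → ℝ} {x₀ x₁ t₁ t₂ s : ℝ}

lemma measurable_switchAt : Measurable (switchAt t₁ x₁ x₀) :=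
  Measurable.ite measurableSet_Iic measurable_const measurable_const

lemma Measurable.comp_switchAt {G : ℝ → ℝ → ℝ} (h₁ : Measurable (G x₁)) (h₀ : Measurable (G x₀)) :
    Measurable fun ω => G (switchAt t₁ x₁ x₀ ω) ω := by
  have : (fun ω => G (switchAt t₁ x₁ x₀ ω) ω) = fun ω => if ω ≤ t₁ then G x₁ ω else G x₀ ω :=
    funext fun ω => apply_ite (G · ω) _ _ _
  exact this ▸ Measurable.ite measurableSet_Iic h₁ h₀

lemma measurable_queryBranch (x : ℝ) : Measurable (queryBranch h b s x) :=
  measurable_const.mul <| Measurable.ite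
    (measurableSet_le (measurable_const.mul measurable_id) measurable_const)
    measurable_const measurable_const

lemma integrable_queryBranch_switchAt {μ : Measure ℝ} [IsFiniteMeasure μ] :
    Integrable (fun ω => queryBranch h b s (switchAt t₁ x₁ x₀ ω) ω) μ := by
  refine Integrable.of_bound
    (Measurable.comp_switchAt (measurable_queryBranch x₁)
      (measurable_queryBranch x₀)).aestronglyMeasurable
    (|h x₁| + |h x₀|) (ae_of_all _ fun ω => ?_)
  simp only [queryBranch, switchAt]
  split_ifs <;> simp <;> positivity

lemma indicator_add_indicator_le_queryBranch_switchAt (hh₀ : 0 ≤ h x₀) (hb₀ : 0 ≤ b x₀)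
    (hb₁ : 0 ≤ b x₁) (hs₁ : b x₁ * t₁ ≤ s) (hs₂ : b x₀ * t₂ ≤ s) (ω : ℝ) :
    (Iic t₁).indicator (fun _ => h x₁) ω + (Ioc t₁ t₂).indicator (fun _ => h x₀) ω ≤
      queryBranch h b s (switchAt t₁ x₁ x₀ ω) ω := by
  rcases le_or_gt ω t₁ with hω₁ | hω₁
  · have hfire : b x₁ * ω ≤ s := (mul_le_mul_of_nonneg_left hω₁ hb₁).trans hs₁
    simp [queryBranch, switchAt, hω₁, hfire]
  rcases le_or_gt ω t₂ with hω₂ | hω₂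
  · have hfire : b x₀ * ω ≤ s := (mul_le_mul_of_nonneg_left hω₂ hb₀).trans hs₂
    simp [queryBranch, switchAt, hω₁.not_ge, hω₂, hω₁, hfire]
  · simp only [queryBranch, switchAt, if_neg hω₁.not_ge, indicator_of_notMem (notMem_Iic.2 hω₁),
      indicator_of_notMem (fun h : ω ∈ Ioc t₁ t₂ => h.2.not_gt hω₂), zero_add]
    split_ifs <;> simp [hh₀]

lemma le_setIntegral_queryBranch_switchAt (hh₀ : 0 ≤ h x₀) (hb₀ : 0 ≤ b x₀) (hb₁ : 0 ≤ b x₁)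
    (ht₁ : 0 ≤ t₁) (ht₁₂ : t₁ ≤ t₂) (ht₂ : t₂ ≤ 1) (hs₁ : b x₁ * t₁ ≤ s) (hs₂ : b x₀ * t₂ ≤ s) :
    h x₁ * t₁ + h x₀ * (t₂ - t₁) ≤
      ∫ ω in Icc (0:ℝ) 1, queryBranch h b s (switchAt t₁ x₁ x₀ ω) ω := by
  rw [← setIntegral_Icc_zero_one_step _ _ ht₁ ht₁₂ ht₂]
  exact integral_mono
    (((integrable_const _).indicator measurableSet_Iic).add
      ((integrable_const _).indicator measurableSet_Ioc))
    integrable_queryBranch_switchAt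
    (indicator_add_indicator_le_queryBranch_switchAt hh₀ hb₀ hb₁ hs₁ hs₂)

end switchAt

theorem active_pvalue_b_general_admissible_general
    (β : ℝ) (hβ : β ∈ Ioo (0:ℝ) 1)
    (h : ℝ → ℝ)
    (M : ℝ) (hM : M = ⨆ y : Icc (0:ℝ) 1, h y) (hM1 : M ≤ 1)
    (btil : ℝ → ℝ) (hbnn : ∀ x, 0 ≤ btil x)
    (hble : ∀ x ∈ Icc (0:ℝ) 1, btil x ≤ (M / (1 - β)) * (if 0 < h x then 1 else 0))
    (x₀ : ℝ) (hx₀ : x₀ ∈ Icc (0:ℝ) 1) (hhx₀ : 0 < h x₀) (hstrict : btil x₀ < M / (1 - β)) :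
    ∃ (Ω : Type) (m : MeasurableSpace Ω) (μ : Measure Ω), IsProbabilityMeasure μ ∧
      ∃ P Pa : Ω → ℝ, Measurable P ∧ Measurable Pa ∧
        (∀ s ∈ Icc (0:ℝ) 1, μ {ω | P ω ≤ s} ≤ ENNReal.ofReal s) ∧
        (∀ ω, Pa ω ∈ Icc (0:ℝ) 1) ∧
        ∃ s ∈ Icc (0:ℝ) 1,
          (1 - β) * s <
            ∫ ω, h (Pa ω) * (if btil (Pa ω) * P ω ≤ s then (1:ℝ) else 0) ∂μ := by
  set c := M / (1 - β)
  set t₂ := 1 - β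
  set s := btil x₀ * t₂
  set t₁ := s / c
  have ht₂ : 0 < t₂ := sub_pos.2 hβ.2
  have hc : 0 < c := (hbnn x₀).trans_lt hstrict
  have hMc : M = c * t₂ := (div_mul_cancel₀ M ht₂.ne').symm
  have hct₁ : c * t₁ = s := mul_div_cancel₀ s hc.ne'
  have hs : s ∈ Icc (0:ℝ) 1 :=
    ⟨mul_nonneg (hbnn x₀) ht₂.le,
      ((mul_lt_mul_of_pos_right hstrict ht₂).trans_eq hMc.symm).le.trans hM1⟩
  have ht₁ : 0 ≤ t₁ := div_nonneg hs.1 hc.le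
  have ht₁₂ : t₁ < t₂ := (div_lt_iff₀' hc).2 (mul_lt_mul_of_pos_right hstrict ht₂)
  obtain ⟨⟨x₁, hx₁⟩, hx₁M⟩ : ∃ y : Icc (0:ℝ) 1, M * t₁ - h x₀ * (t₂ - t₁) < h y * t₁ := by
    apply exists_lt_of_lt_ciSup
    rw [← Real.iSup_mul_of_nonneg ht₁, ← hM]
    linarith [mul_pos hhx₀ (sub_pos.2 ht₁₂)]
  have hb₁ : btil x₁ ≤ c := (hble x₁ hx₁).trans (by split_ifs <;> linarith)
  have hPa : ∀ ω, switchAt t₁ x₁ x₀ ω ∈ Icc (0:ℝ) 1 := fun ω => by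
    unfold switchAt; split_ifs <;> assumption
  refine ⟨ℝ, _, volume.restrict (Icc 0 1), ⟨by simp⟩, fun ω => ω, switchAt t₁ x₁ x₀,
    measurable_id, measurable_switchAt, fun s _ => restrict_Icc_zero_one_setOf_le s, hPa, s, hs, ?_⟩
  calc (1 - β) * s = M * t₁ := by rw [hMc, mul_right_comm, hct₁, mul_comm]
    _ < h x₁ * t₁ + h x₀ * (t₂ - t₁) := by linarith
    _ ≤ _ := le_setIntegral_queryBranch_switchAt hhx₀.le (hbnn x₀) (hbnn x₁) ht₁ ht₁₂.le
      (sub_le_self 1 hβ.1.le) ((mul_le_mul_of_nonneg_right hb₁ ht₁).trans_eq hct₁) le_rfl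

/-- Admissibility of the general-dependence scaling `b(x) = (sup h)/(1-β) · 1{h(x)>0}`:
any pointwise strictly smaller scaling violates the query-branch validity constraint for
some dependent pair `(P, P^a)`. -/
theorem active_pvalue_b_general_admissible
    (β : ℝ) (hβ : β ∈ Ioo (0:ℝ) 1)
    (h : ℝ → ℝ) (hhm : Measurable h) (hh01 : ∀ x ∈ Icc (0:ℝ) 1, h x ∈ Icc (0:ℝ) 1)
    (M : ℝ) (hM : M = ⨆ y : Icc (0:ℝ) 1, h y) (hM1 : M ≤ 1)
    (btil : ℝ → ℝ) (hbnn : ∀ x, 0 ≤ btil x)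
    (hble : ∀ x ∈ Icc (0:ℝ) 1, btil x ≤ (M / (1 - β)) * (if 0 < h x then 1 else 0))
    (x₀ : ℝ) (hx₀ : x₀ ∈ Icc (0:ℝ) 1) (hhx₀ : 0 < h x₀) (hstrict : btil x₀ < M / (1 - β)) :
    ∃ (Ω : Type) (m : MeasurableSpace Ω) (μ : Measure Ω), IsProbabilityMeasure μ ∧
      ∃ P Pa : Ω → ℝ, Measurable P ∧ Measurable Pa ∧
        (∀ s ∈ Icc (0:ℝ) 1, μ {ω | P ω ≤ s} ≤ ENNReal.ofReal s) ∧
        (∀ ω, Pa ω ∈ Icc (0:ℝ) 1) ∧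
        ∃ s ∈ Icc (0:ℝ) 1,
          (1 - β) * s <
            ∫ ω, h (Pa ω) * (if btil (Pa ω) * P ω ≤ s then (1:ℝ) else 0) ∂μ :=
  active_pvalue_b_general_admissible_general β hβ h M hM hM1 btil hbnn hble x₀ hx₀ hhx₀ hstrict
end
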